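/- arXiv:2101.04036 — 4 statements merged into one kernel-verified Lean document; each statement's English description precedes it below -/
import Mathlib

section
/- Let w ≥ 1 and let {a_s}_{s=0}^w be strictly decreasing positive reals with a_w = 0, and {b_s}_{s=0}^w strictly increasing nonnegative reals with b_0 = 0 and b_s > 0 for s ≥ 1. Let μ be the probability distribution on {0,...,w} with μ(s) = μ(0)·∏_{i=1}^{s} a_{i-1}/b_i, and define the operator T by (Tf)(s) = a_s f(s+1) − b_s f(s). Then for any t ∈ {1,...,w−1}, the function f defined by f(0)=0 and f(s) = (μ(t)/(b_s μ(s)))·(1_{t<s} − μ({0,...,s−1})) for s ≥ 1 satisfies (Tf)(s) = 1_{s=t} − μ(t) for all s ∈ {0,...,w}. -/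
/-!
The product formula for `μ` is equivalent to detailed balance `b (s+1) μ (s+1) = a s μ s`.
Multiplying by `μ s`, this turns both terms of `T f (s)` into values of the single function
`g s = μ t (1_{t<s} - μ({0,…,s-1}))`: `b s μ s f s = g s` and `a s μ s f (s+1) = g (s+1)`, the
latter at `s = w` because `a w = 0` and `μ({0,…,w}) = 1`. Hence `μ s · T f (s)` telescopes to
`μ t 1_{s=t} - μ t μ s`, and dividing by `μ s ≠ 0` gives the claim.
-/

open Finset

section BirthDeath

variable {w : ℕ} {a b μ : ℕ → ℝ}

theorem ne_zero_of_prod_ratio (ha : ∀ s < w, a s ≠ 0) (hb : ∀ s, 1 ≤ s → s ≤ w → b s ≠ 0)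
    (hμ : ∀ s, s ≤ w → μ s = μ 0 * ∏ i ∈ range s, (a i / b (i + 1)))
    (hμsum : ∑ s ∈ range (w + 1), μ s = 1) {s : ℕ} (hs : s ≤ w) : μ s ≠ 0 := by
  have hμ0 : μ 0 ≠ 0 := by
    intro h0
    have hsum_zero : ∑ s ∈ range (w + 1), μ s = 0 :=
      sum_eq_zero fun s hs' => by rw [hμ s (Nat.lt_succ_iff.mp (mem_range.mp hs')), h0, zero_mul]
    exact zero_ne_one (hsum_zero ▸ hμsum)
  rw [hμ s hs]
  refine mul_ne_zero hμ0 (prod_ne_zero_iff.mpr fun i hi => ?_)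
  have hi : i < s := mem_range.mp hi
  exact div_ne_zero (ha i (by omega)) (hb (i + 1) (by omega) (by omega))

theorem detailed_balance_of_prod_ratio
    (hμ : ∀ s, s ≤ w → μ s = μ 0 * ∏ i ∈ range s, (a i / b (i + 1)))
    {s : ℕ} (hs : s < w) (hb : b (s + 1) ≠ 0) : b (s + 1) * μ (s + 1) = a s * μ s := by
  rw [hμ (s + 1) hs, hμ s hs.le, prod_range_succ]
  field_simp

theorem indicator_lt_succ_sub_indicator_lt (t s : ℕ) :
    ((if t < s + 1 then (1 : ℝ) else 0) - if t < s then 1 else 0) = if s = t then 1 else 0 := by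
  split_ifs <;> first | omega | norm_num

variable {t : ℕ} {f : ℕ → ℝ}
  (hf0 : f 0 = 0)
  (hf : ∀ s, 1 ≤ s → s ≤ w →
    f s = μ t / (b s * μ s) * ((if t < s then (1 : ℝ) else 0) - ∑ i ∈ range s, μ i))
include hf0 hf

theorem mul_mul_stein_solution_eq (hb : ∀ s, 1 ≤ s → s ≤ w → b s ≠ 0)
    (hμne : ∀ s ≤ w, μ s ≠ 0) {s : ℕ} (hs : s ≤ w) :
    b s * μ s * f s = μ t * ((if t < s then 1 else 0) - ∑ i ∈ range s, μ i) := by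
  rcases Nat.eq_zero_or_pos s with rfl | hpos
  · simp [hf0]
  · rw [hf s hpos hs]
    field_simp [hb s hpos hs, hμne s hs]

theorem mul_mul_stein_solution_succ_eq (htw : t ≤ w) (ha_zero : a w = 0)
    (hb : ∀ s, 1 ≤ s → s ≤ w → b s ≠ 0)
    (hμ : ∀ s, s ≤ w → μ s = μ 0 * ∏ i ∈ range s, (a i / b (i + 1)))
    (hμsum : ∑ s ∈ range (w + 1), μ s = 1) (hμne : ∀ s ≤ w, μ s ≠ 0) {s : ℕ} (hs : s ≤ w) :
    a s * μ s * f (s + 1) =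
      μ t * ((if t < s + 1 then 1 else 0) - ∑ i ∈ range (s + 1), μ i) := by
  rcases hs.lt_or_eq with hs | rfl
  · rw [← detailed_balance_of_prod_ratio hμ hs (hb _ (by omega) hs)]
    exact mul_mul_stein_solution_eq hf0 hf hb hμne hs
  · rw [ha_zero, hμsum, if_pos (Nat.lt_succ_of_le htw)]
    ring

end BirthDeath

theorem stein_operator_inverse_exists_general (w t : ℕ) (htw : t < w)
    (a b μ f : ℕ → ℝ)
    (ha_pos : ∀ s, s < w → 0 < a s) (ha_zero : a w = 0)
    (hb_pos : ∀ s, 1 ≤ s → s ≤ w → 0 < b s)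
    (hμ : ∀ s, s ≤ w → μ s = μ 0 * ∏ i ∈ Finset.range s, (a i / b (i + 1)))
    (hμsum : ∑ s ∈ Finset.range (w + 1), μ s = 1)
    (hf0 : f 0 = 0)
    (hf : ∀ s, 1 ≤ s → s ≤ w →
      f s = μ t / (b s * μ s) *
        ((if t < s then (1 : ℝ) else 0) - ∑ i ∈ Finset.range s, μ i)) :
    ∀ s, s ≤ w → a s * f (s + 1) - b s * f s = (if s = t then (1 : ℝ) else 0) - μ t := by
  have hb : ∀ s, 1 ≤ s → s ≤ w → b s ≠ 0 := fun s h1 h2 => (hb_pos s h1 h2).ne'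
  have hμne : ∀ s ≤ w, μ s ≠ 0 := fun s =>
    ne_zero_of_prod_ratio (fun s hs => (ha_pos s hs).ne') hb hμ hμsum
  intro s hs
  have hlower := mul_mul_stein_solution_eq hf0 hf hb hμne hs
  have hupper := mul_mul_stein_solution_succ_eq hf0 hf htw.le ha_zero hb hμ hμsum hμne hs
  refine mul_left_cancel₀ (hμne s hs) ?_
  calc μ s * (a s * f (s + 1) - b s * f s)
      = a s * μ s * f (s + 1) - b s * μ s * f s := by ring
    _ = μ t * (((if t < s + 1 then 1 else 0) - if t < s then 1 else 0) - μ s) := by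
        rw [hupper, hlower, sum_range_succ]; ring
    _ = μ s * ((if s = t then 1 else 0) - μ t) := by
        rw [indicator_lt_succ_sub_indicator_lt]
        split_ifs with hst
        · rw [hst]
        · ring

/-- Existence of an inverse to the Stein operator `T f(s) = a_s f(s+1) - b_s f(s)`
for a birth–death type distribution `μ` on `{0,...,w}`: the explicitly defined `f`
satisfies `T f(s) = 1_{s=t} - μ(t)` for all `s ∈ {0,...,w}`. -/
theorem stein_operator_inverse_exists (w t : ℕ) (hw : 1 ≤ w) (ht : 1 ≤ t) (htw : t < w)
    (a b μ f : ℕ → ℝ)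
    (ha_pos : ∀ s, s < w → 0 < a s) (ha_zero : a w = 0)
    (ha_anti : ∀ s, s < w → a (s + 1) < a s)
    (hb_zero : b 0 = 0) (hb_pos : ∀ s, 1 ≤ s → s ≤ w → 0 < b s)
    (hb_mono : ∀ s, s < w → b s < b (s + 1))
    (hμ : ∀ s, s ≤ w → μ s = μ 0 * ∏ i ∈ Finset.range s, (a i / b (i + 1)))
    (hμsum : ∑ s ∈ Finset.range (w + 1), μ s = 1)
    (hf0 : f 0 = 0)
    (hf : ∀ s, 1 ≤ s → s ≤ w →
      f s = μ t / (b s * μ s) *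
        ((if t < s then (1 : ℝ) else 0) - ∑ i ∈ Finset.range s, μ i)) :
    ∀ s, s ≤ w → a s * f (s + 1) - b s * f s = (if s = t then (1 : ℝ) else 0) - μ t :=
  stein_operator_inverse_exists_general w t htw a b μ f ha_pos ha_zero hb_pos hμ hμsum hf0 hf
end

section
/- In the setting of the Stein operator inverse lemma (with a strictly decreasing, b strictly increasing, a_w = b_0 = 0, other values positive), the solution f to Tf = 1_{·=t} − μ(t) is non-increasing on {0,...,t} and on {t+1,...,w}, increasing from t to t+1, non-positive on {0,...,t}, and non-negative on {t+1,...,w}. -/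
/-- Monotonicity and sign properties of the Stein operator inverse `f`:
`f` is non-increasing on `{0,...,t}` and on `{t+1,...,w}`, increasing from `t`
to `t+1`, non-positive on `{0,...,t}` and non-negative on `{t+1,...,w}`. -/
theorem stein_operator_inverse_monotone (w t : ℕ) (hw : 1 ≤ w) (ht : 1 ≤ t) (htw : t < w)
    (a b μ f : ℕ → ℝ)
    (ha_pos : ∀ s, s < w → 0 < a s) (ha_zero : a w = 0)
    (ha_anti : ∀ s, s < w → a (s + 1) < a s)
    (hb_zero : b 0 = 0) (hb_pos : ∀ s, 1 ≤ s → s ≤ w → 0 < b s)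
    (hb_mono : ∀ s, s < w → b s < b (s + 1))
    (hμ : ∀ s, s ≤ w → μ s = μ 0 * ∏ i ∈ Finset.range s, (a i / b (i + 1)))
    (hμsum : ∑ s ∈ Finset.range (w + 1), μ s = 1)
    (hf0 : f 0 = 0)
    (hf : ∀ s, 1 ≤ s → s ≤ w →
      f s = μ t / (b s * μ s) *
        ((if t < s then (1 : ℝ) else 0) - ∑ i ∈ Finset.range s, μ i)) :
    (∀ s, s < t → f (s + 1) ≤ f s) ∧
    (∀ s, t + 1 ≤ s → s < w → f (s + 1) ≤ f s) ∧
    f t < f (t + 1) ∧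
    (∀ s, s ≤ t → f s ≤ 0) ∧
    (∀ s, t + 1 ≤ s → s ≤ w → 0 ≤ f s) := by
  -- global monotonicity of a and b
  have ha_le : ∀ j, j ≤ w → ∀ i, i ≤ j → a j ≤ a i := by
    intro j
    induction j with
    | zero =>
      intro _ i hi
      rw [Nat.le_zero.mp hi]
    | succ n ih =>
      intro hn i hi
      rcases Nat.eq_or_lt_of_le hi with h | h
      · rw [h]
      · have h1 : a (n + 1) ≤ a n := le_of_lt (ha_anti n (by omega))
        exact h1.trans (ih (by omega) i (by omega))
  have hb_le : ∀ j, j ≤ w → ∀ i, i ≤ j → b i ≤ b j := by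
    intro j
    induction j with
    | zero =>
      intro _ i hi
      rw [Nat.le_zero.mp hi]
    | succ n ih =>
      intro hn i hi
      rcases Nat.eq_or_lt_of_le hi with h | h
      · rw [h]
      · have h1 : b n ≤ b (n + 1) := le_of_lt (hb_mono n (by omega))
        exact (ih (by omega) i (by omega)).trans h1
  -- positivity of μ
  have hPpos : ∀ s, s ≤ w → 0 < ∏ i ∈ Finset.range s, (a i / b (i + 1)) := by
    intro s hs
    apply Finset.prod_pos
    intro i hi
    have hi' : i < w := lt_of_lt_of_le (Finset.mem_range.mp hi) hs
    exact div_pos (ha_pos i hi') (hb_pos (i + 1) (by omega) (by omega))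
  have hμ0 : 0 < μ 0 := by
    by_contra h
    push_neg at h
    have hsum : ∑ s ∈ Finset.range (w + 1), μ s ≤ 0 := by
      apply Finset.sum_nonpos
      intro s hs
      have hs' : s ≤ w := by have := Finset.mem_range.mp hs; omega
      rw [hμ s hs']
      exact mul_nonpos_of_nonpos_of_nonneg h (le_of_lt (hPpos s hs'))
    linarith
  have hμpos : ∀ s, s ≤ w → 0 < μ s := by
    intro s hs
    rw [hμ s hs]
    exact mul_pos hμ0 (hPpos s hs)
  -- key identity
  have hkey : ∀ s, s < w → b (s + 1) * μ (s + 1) = a s * μ s := by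
    intro s hs
    have hbne : b (s + 1) ≠ 0 := ne_of_gt (hb_pos (s + 1) (by omega) (by omega))
    have h1 : μ (s + 1) = μ s * (a s / b (s + 1)) := by
      rw [hμ (s + 1) (by omega), hμ s (by omega), Finset.prod_range_succ, mul_assoc]
    rw [h1]
    field_simp
  -- partial sums positive
  have hFpos : ∀ s, 1 ≤ s → s ≤ w → 0 < ∑ i ∈ Finset.range s, μ i := by
    intro s h1 hs
    apply Finset.sum_pos
    · intro i hi
      exact hμpos i (by have := Finset.mem_range.mp hi; omega)
    · exact ⟨0, Finset.mem_range.mpr (by omega)⟩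
  -- split of total sum
  have hsplit : ∀ s, s ≤ w + 1 →
      (∑ i ∈ Finset.range s, μ i) + ∑ i ∈ Finset.Ico s (w + 1), μ i = 1 := by
    intro s hs
    rw [Finset.range_eq_Ico, Finset.sum_Ico_consecutive μ (Nat.zero_le s) hs,
      ← Finset.range_eq_Ico]
    exact hμsum
  have hGpos : ∀ s, s ≤ w → 0 < ∑ i ∈ Finset.Ico s (w + 1), μ i := by
    intro s hs
    apply Finset.sum_pos
    · intro i hi
      have := Finset.mem_Ico.mp hi
      exact hμpos i (by omega)
    · exact ⟨s, Finset.mem_Ico.mpr ⟨le_refl s, by omega⟩⟩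
  -- sign facts
  have hneg : ∀ s, 1 ≤ s → s ≤ t → f s < 0 := by
    intro s h1 hst
    have hsw : s ≤ w := by omega
    rw [hf s h1 hsw, if_neg (by omega)]
    have hD : 0 < b s * μ s := mul_pos (hb_pos s h1 hsw) (hμpos s hsw)
    have hμt : 0 < μ t := hμpos t (by omega)
    exact mul_neg_of_pos_of_neg (div_pos hμt hD) (by linarith [hFpos s h1 hsw])
  have hpos : ∀ s, t + 1 ≤ s → s ≤ w → 0 < f s := by
    intro s h1 hsw
    rw [hf s (by omega) hsw, if_pos (by omega)]
    have hD : 0 < b s * μ s := mul_pos (hb_pos s (by omega) hsw) (hμpos s hsw)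
    have hμt : 0 < μ t := hμpos t (by omega)
    have htail : 0 < 1 - ∑ i ∈ Finset.range s, μ i := by
      have := hsplit s (by omega)
      have := hGpos s hsw
      linarith
    exact mul_pos (div_pos hμt hD) htail
  -- key inequality, lower range
  have hkey2 : ∀ s, 1 ≤ s → s ≤ w →
      (∑ i ∈ Finset.range s, μ i) * (a s - b s) ≤ b s * μ s := by
    intro s h1 hsw
    have htel : ∑ i ∈ Finset.range s, μ i * (a i - b i) = b s * μ s := by
      have hterm : ∀ i ∈ Finset.range s, μ i * (a i - b i)
          = b (i + 1) * μ (i + 1) - b i * μ i := by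
        intro i hi
        have hiw : i < w := lt_of_lt_of_le (Finset.mem_range.mp hi) hsw
        rw [hkey i hiw]
        ring
      rw [Finset.sum_congr rfl hterm, Finset.sum_range_sub (fun i => b i * μ i)]
      simp [hb_zero]
    calc (∑ i ∈ Finset.range s, μ i) * (a s - b s)
        = ∑ i ∈ Finset.range s, μ i * (a s - b s) := by rw [Finset.sum_mul]
      _ ≤ ∑ i ∈ Finset.range s, μ i * (a i - b i) := by
          apply Finset.sum_le_sum
          intro i hi
          have his : i < s := Finset.mem_range.mp hi
          have h1 : a s ≤ a i := ha_le s hsw i (by omega)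
          have h2 : b i ≤ b s := hb_le s hsw i (by omega)
          have hμi : 0 ≤ μ i := le_of_lt (hμpos i (by omega))
          nlinarith
      _ = b s * μ s := htel
  -- key inequality, upper range
  have hkey3 : ∀ s, s < w →
      (b s - a s) * (∑ i ∈ Finset.Ico (s + 1) (w + 1), μ i) ≤ a s * μ s := by
    intro s hs
    have htel : ∑ i ∈ Finset.Ico (s + 1) (w + 1), μ i * (b i - a i) = a s * μ s := by
      rw [Finset.sum_Ico_eq_sum_range]
      have hterm : ∀ k ∈ Finset.range (w + 1 - (s + 1)),
          μ (s + 1 + k) * (b (s + 1 + k) - a (s + 1 + k))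
          = a (s + k) * μ (s + k) - a (s + (k + 1)) * μ (s + (k + 1)) := by
        intro k hk
        have hkw : s + k < w := by have := Finset.mem_range.mp hk; omega
        have he : s + 1 + k = s + k + 1 := by omega
        have he2 : s + (k + 1) = s + k + 1 := by omega
        rw [he, he2]
        linear_combination hkey (s + k) hkw
      rw [Finset.sum_congr rfl hterm,
        Finset.sum_range_sub' (fun k => a (s + k) * μ (s + k))]
      have he : s + (w + 1 - (s + 1)) = w := by omega
      simp only [Nat.add_zero, he, ha_zero]
      ring
    calc (b s - a s) * ∑ i ∈ Finset.Ico (s + 1) (w + 1), μ i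
        = ∑ i ∈ Finset.Ico (s + 1) (w + 1), (b s - a s) * μ i := by
          rw [Finset.mul_sum]
      _ ≤ ∑ i ∈ Finset.Ico (s + 1) (w + 1), μ i * (b i - a i) := by
          apply Finset.sum_le_sum
          intro i hi
          have his := Finset.mem_Ico.mp hi
          have h1 : a i ≤ a s := ha_le i (by omega) s (by omega)
          have h2 : b s ≤ b i := hb_le i (by omega) s (by omega)
          have hμi : 0 ≤ μ i := le_of_lt (hμpos i (by omega))
          nlinarith
      _ = a s * μ s := htel
  refine ⟨?_, ?_, ?_, ?_, ?_⟩
  · -- non-increasing on {0,...,t}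
    intro s hst
    rcases Nat.eq_zero_or_pos s with rfl | h1
    · rw [hf0]
      exact le_of_lt (hneg 1 le_rfl (by omega))
    · have hsw : s < w := by omega
      have hs1w : s + 1 ≤ w := by omega
      have hD1 : 0 < b s * μ s := mul_pos (hb_pos s h1 (by omega)) (hμpos s (by omega))
      have hD2 : 0 < b (s + 1) * μ (s + 1) :=
        mul_pos (hb_pos (s + 1) (by omega) hs1w) (hμpos (s + 1) hs1w)
      have hμt : 0 < μ t := hμpos t (by omega)
      have hμs : 0 < μ s := hμpos s (by omega)
      rw [hf s h1 (by omega), hf (s + 1) (by omega) hs1w,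
        if_neg (by omega), if_neg (by omega)]
      rw [div_mul_eq_mul_div, div_mul_eq_mul_div, div_le_div_iff₀ hD2 hD1]
      have hF : ∑ i ∈ Finset.range (s + 1), μ i
          = (∑ i ∈ Finset.range s, μ i) + μ s := Finset.sum_range_succ μ s
      have hk := hkey s hsw
      have hk2 := hkey2 s h1 (by omega)
      rw [hF, hk]
      nlinarith [mul_le_mul_of_nonneg_left hk2 (le_of_lt (mul_pos hμt hμs))]
  · -- non-increasing on {t+1,...,w}
    intro s hts hsw
    have h1 : 1 ≤ s := by omega
    have hs1w : s + 1 ≤ w := by omega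
    have hD1 : 0 < b s * μ s := mul_pos (hb_pos s h1 (by omega)) (hμpos s (by omega))
    have hD2 : 0 < b (s + 1) * μ (s + 1) :=
      mul_pos (hb_pos (s + 1) (by omega) hs1w) (hμpos (s + 1) hs1w)
    have hμt : 0 < μ t := hμpos t (by omega)
    have hμs : 0 < μ s := hμpos s (by omega)
    rw [hf s h1 (by omega), hf (s + 1) (by omega) hs1w,
      if_pos (by omega), if_pos (by omega)]
    rw [div_mul_eq_mul_div, div_mul_eq_mul_div, div_le_div_iff₀ hD2 hD1]
    have hG1 : 1 - ∑ i ∈ Finset.range s, μ i = ∑ i ∈ Finset.Ico s (w + 1), μ i := by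
      have := hsplit s (by omega); linarith
    have hG2 : 1 - ∑ i ∈ Finset.range (s + 1), μ i
        = ∑ i ∈ Finset.Ico (s + 1) (w + 1), μ i := by
      have := hsplit (s + 1) (by omega); linarith
    have hGsplit : ∑ i ∈ Finset.Ico s (w + 1), μ i
        = μ s + ∑ i ∈ Finset.Ico (s + 1) (w + 1), μ i := by
      rw [← Finset.sum_eq_sum_Ico_succ_bot (by omega : s < w + 1) μ]
    have hk := hkey s hsw
    have hk3 := hkey3 s hsw
    have e1 : μ t * (1 - ∑ i ∈ Finset.range (s + 1), μ i) * (b s * μ s)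
        = μ t * (∑ i ∈ Finset.Ico (s + 1) (w + 1), μ i) * (b s * μ s) := by
      rw [← hG2]
    have e2 : μ t * (1 - ∑ i ∈ Finset.range s, μ i) * (b (s + 1) * μ (s + 1))
        = μ t * (μ s + ∑ i ∈ Finset.Ico (s + 1) (w + 1), μ i) * (a s * μ s) := by
      rw [← hk, ← hGsplit, ← hG1]
    rw [e1, e2]
    nlinarith [mul_le_mul_of_nonneg_left hk3 (le_of_lt (mul_pos hμt hμs))]
  · -- strict increase at t
    have h1 := hneg t ht le_rfl
    have h2 := hpos (t + 1) le_rfl (by omega)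
    linarith
  · -- non-positive on {0,...,t}
    intro s hst
    rcases Nat.eq_zero_or_pos s with rfl | h1
    · rw [hf0]
    · exact le_of_lt (hneg s h1 hst)
  · -- non-negative on {t+1,...,w}
    intro s hts hsw
    exact le_of_lt (hpos s hts hsw)
end

section
/- In the setting of the Stein operator inverse lemma, the forward difference Δf(s) := f(s+1) − f(s) satisfies sup_{0≤s≤w−1} |Δf(s)| = Δf(t), and moreover Δf(t) ≤ min(1/a_t, 1/b_t). -/
/-- Uniform control of the forward differences of the Stein operator inverse:
`sup_{0 ≤ s ≤ w-1} |Δf(s)| = Δf(t)` and `Δf(t) ≤ min(1/a_t, 1/b_t)`. -/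
theorem stein_operator_inverse_diff_bound (w t : ℕ) (hw : 1 ≤ w) (ht : 1 ≤ t) (htw : t < w)
    (a b μ f : ℕ → ℝ)
    (ha_pos : ∀ s, s < w → 0 < a s) (ha_zero : a w = 0)
    (ha_anti : ∀ s, s < w → a (s + 1) < a s)
    (hb_zero : b 0 = 0) (hb_pos : ∀ s, 1 ≤ s → s ≤ w → 0 < b s)
    (hb_mono : ∀ s, s < w → b s < b (s + 1))
    (hμ : ∀ s, s ≤ w → μ s = μ 0 * ∏ i ∈ Finset.range s, (a i / b (i + 1)))
    (hμsum : ∑ s ∈ Finset.range (w + 1), μ s = 1)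
    (hf0 : f 0 = 0)
    (hf : ∀ s, 1 ≤ s → s ≤ w →
      f s = μ t / (b s * μ s) *
        ((if t < s then (1 : ℝ) else 0) - ∑ i ∈ Finset.range s, μ i)) :
    (∀ s, s ≤ w - 1 → |f (s + 1) - f s| ≤ f (t + 1) - f t) ∧
    f (t + 1) - f t ≤ min (a t)⁻¹ (b t)⁻¹ := by
  -- a is antitone, b is monotone on [0, w]
  have a_mono : ∀ j, j ≤ w → ∀ i, i ≤ j → a j ≤ a i := by
    intro j hj
    induction j with
    | zero => intro i hi; interval_cases i; exact le_refl _
    | succ n ih =>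
      intro i hi
      rcases eq_or_lt_of_le hi with h | h
      · subst h; exact le_refl _
      · have h1 : a (n + 1) < a n := ha_anti n (by omega)
        have h2 := ih (by omega) i (by omega)
        linarith
  have b_mono : ∀ j, j ≤ w → ∀ i, i ≤ j → b i ≤ b j := by
    intro j hj
    induction j with
    | zero => intro i hi; interval_cases i; exact le_refl _
    | succ n ih =>
      intro i hi
      rcases eq_or_lt_of_le hi with h | h
      · subst h; exact le_refl _
      · have h1 : b n < b (n + 1) := hb_mono n (by omega)
        have h2 := ih (by omega) i (by omega)
        linarith
  -- positivity of the products and of μ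
  have hP : ∀ s, s ≤ w → 0 < ∏ i ∈ Finset.range s, (a i / b (i + 1)) := by
    intro s hs
    apply Finset.prod_pos
    intro i hi
    rw [Finset.mem_range] at hi
    exact div_pos (ha_pos i (by omega)) (hb_pos (i + 1) (by omega) (by omega))
  have hμ0 : 0 < μ 0 := by
    by_contra h
    push_neg at h
    have hs0 : ∑ s ∈ Finset.range (w + 1), μ s ≤ 0 := by
      apply Finset.sum_nonpos
      intro s hs
      rw [Finset.mem_range] at hs
      rw [hμ s (by omega)]
      have := hP s (by omega)
      nlinarith
    linarith
  have hμpos : ∀ s, s ≤ w → 0 < μ s := by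
    intro s hs
    rw [hμ s hs]
    exact mul_pos hμ0 (hP s hs)
  -- detailed balance
  have hdb : ∀ s, s < w → b (s + 1) * μ (s + 1) = a s * μ s := by
    intro s hs
    have hb1 : b (s + 1) ≠ 0 := (hb_pos (s + 1) (by omega) (by omega)).ne'
    have hstep : μ (s + 1) = μ s * (a s / b (s + 1)) := by
      rw [hμ (s + 1) (by omega), hμ s (by omega), Finset.prod_range_succ]
      ring
    rw [hstep]
    field_simp
  -- key inequality I : a s * F s ≤ b s * F (s+1)
  have hI : ∀ s, 1 ≤ s → s ≤ w →
      a s * (∑ i ∈ Finset.range s, μ i) ≤ b s * (∑ i ∈ Finset.range (s + 1), μ i) := by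
    intro s h1 hsw
    have key : ∀ i ∈ Finset.range s, a s * μ i ≤ b s * μ (i + 1) := by
      intro i hi
      rw [Finset.mem_range] at hi
      have ha1 : a s * μ i ≤ a i * μ i :=
        mul_le_mul_of_nonneg_right (a_mono s hsw i (by omega)) (hμpos i (by omega)).le
      have ha2 : a i * μ i = b (i + 1) * μ (i + 1) := (hdb i (by omega)).symm
      have ha3 : b (i + 1) * μ (i + 1) ≤ b s * μ (i + 1) :=
        mul_le_mul_of_nonneg_right (b_mono s hsw (i + 1) (by omega))
          (hμpos (i + 1) (by omega)).le
      linarith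
    calc a s * ∑ i ∈ Finset.range s, μ i
        = ∑ i ∈ Finset.range s, a s * μ i := Finset.mul_sum _ _ _
      _ ≤ ∑ i ∈ Finset.range s, b s * μ (i + 1) := Finset.sum_le_sum key
      _ = b s * ∑ i ∈ Finset.range s, μ (i + 1) := (Finset.mul_sum _ _ _).symm
      _ ≤ b s * ∑ i ∈ Finset.range (s + 1), μ i := by
          rw [Finset.sum_range_succ']
          have hb := hb_pos s h1 hsw
          nlinarith [hμ0]
  -- key inequality II : b s * (1 - F (s+1)) ≤ a s * (1 - F s)
  have hF_Ico : ∀ s, s ≤ w + 1 →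
      1 - (∑ i ∈ Finset.range s, μ i) = ∑ i ∈ Finset.Ico s (w + 1), μ i := by
    intro s hs
    have h0 := Finset.sum_Ico_consecutive μ (Nat.zero_le s) hs
    rw [← Finset.range_eq_Ico, ← Finset.range_eq_Ico] at h0
    linarith
  have hII : ∀ s, s < w →
      b s * (1 - ∑ i ∈ Finset.range (s + 1), μ i) ≤
      a s * (1 - ∑ i ∈ Finset.range s, μ i) := by
    intro s hs
    rw [hF_Ico (s + 1) (by omega), hF_Ico s (by omega)]
    rw [Finset.sum_Ico_eq_sum_range, Finset.sum_Ico_eq_sum_range]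
    have h1 : w + 1 - (s + 1) = w - s := by omega
    have h2 : w + 1 - s = (w - s) + 1 := by omega
    rw [h1, h2, Finset.sum_range_succ]
    have key : ∀ i ∈ Finset.range (w - s), b s * μ (s + 1 + i) ≤ a s * μ (s + i) := by
      intro i hi
      rw [Finset.mem_range] at hi
      have he : s + 1 + i = (s + i) + 1 := by omega
      rw [he]
      have hb1 : b s * μ (s + i + 1) ≤ b (s + i + 1) * μ (s + i + 1) :=
        mul_le_mul_of_nonneg_right (b_mono (s + i + 1) (by omega) s (by omega))
          (hμpos (s + i + 1) (by omega)).le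
      have hb2 : b (s + i + 1) * μ (s + i + 1) = a (s + i) * μ (s + i) := hdb (s + i) (by omega)
      have hb3 : a (s + i) * μ (s + i) ≤ a s * μ (s + i) :=
        mul_le_mul_of_nonneg_right (a_mono (s + i) (by omega) s (by omega))
          (hμpos (s + i) (by omega)).le
      linarith
    have hsum : b s * ∑ i ∈ Finset.range (w - s), μ (s + 1 + i) ≤
        a s * ∑ i ∈ Finset.range (w - s), μ (s + i) := by
      rw [Finset.mul_sum, Finset.mul_sum]
      exact Finset.sum_le_sum key
    have hst : s + (w - s) = w := by omega
    have hlast : 0 ≤ a s * μ (s + (w - s)) :=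
      mul_nonneg (ha_pos s hs).le (by rw [hst]; exact (hμpos w le_rfl).le)
    nlinarith [hlast]
  -- basic positivity
  have hμt : 0 < μ t := hμpos t htw.le
  have hbμ : ∀ s, 1 ≤ s → s ≤ w → 0 < b s * μ s := fun s h1 h2 =>
    mul_pos (hb_pos s h1 h2) (hμpos s h2)
  have hFnn : ∀ s, s ≤ w + 1 → 0 ≤ ∑ i ∈ Finset.range s, μ i := by
    intro s hs
    apply Finset.sum_nonneg
    intro i hi
    rw [Finset.mem_range] at hi
    exact (hμpos i (by omega)).le
  have hFle1 : ∀ s, s ≤ w + 1 → (∑ i ∈ Finset.range s, μ i) ≤ 1 := by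
    intro s hs
    rw [← hμsum]
    apply Finset.sum_le_sum_of_subset_of_nonneg
    · exact Finset.range_subset_range.mpr hs
    · intro i hi _
      rw [Finset.mem_range] at hi
      exact (hμpos i (by omega)).le
  -- explicit formulas for f
  have hf_le : ∀ s, 1 ≤ s → s ≤ t →
      f s = -(μ t * (∑ i ∈ Finset.range s, μ i) / (b s * μ s)) := by
    intro s h1 hst
    rw [hf s h1 (by omega), if_neg (by omega)]
    ring
  have hf_gt : ∀ s, t < s → s ≤ w →
      f s = μ t * (1 - ∑ i ∈ Finset.range s, μ i) / (b s * μ s) := by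
    intro s h1 hsw
    rw [hf s (by omega) hsw, if_pos h1]
    ring
  -- f is decreasing on [0, t]
  have dec1 : ∀ s, s < t → f (s + 1) ≤ f s := by
    intro s hst
    rcases Nat.eq_zero_or_pos s with rfl | hs1
    · rw [hf0, hf_le 1 le_rfl (by omega)]
      have h0 : 0 ≤ μ t * (∑ i ∈ Finset.range 1, μ i) / (b 1 * μ 1) :=
        div_nonneg (mul_nonneg hμt.le (hFnn 1 (by omega))) (hbμ 1 le_rfl hw).le
      linarith
    · rw [hf_le s hs1 (by omega), hf_le (s + 1) (by omega) (by omega)]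
      apply neg_le_neg
      rw [div_le_div_iff₀ (hbμ s hs1 (by omega)) (hbμ (s + 1) (by omega) (by omega))]
      rw [hdb s (by omega)]
      have key := mul_le_mul_of_nonneg_left (hI s hs1 (by omega))
        (mul_nonneg hμt.le (hμpos s (by omega)).le)
      nlinarith [key]
  -- f is decreasing on [t+1, w]
  have dec2 : ∀ s, t < s → s < w → f (s + 1) ≤ f s := by
    intro s h1 h2
    rw [hf_gt s h1 (by omega), hf_gt (s + 1) (by omega) (by omega)]
    rw [div_le_div_iff₀ (hbμ (s + 1) (by omega) (by omega)) (hbμ s (by omega) (by omega))]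
    rw [hdb s h2]
    have key := mul_le_mul_of_nonneg_left (hII s h2)
      (mul_nonneg hμt.le (hμpos s (by omega)).le)
    nlinarith [key]
  -- sign facts
  have hft : f t ≤ 0 := by
    rw [hf_le t ht le_rfl]
    have h0 : 0 ≤ μ t * (∑ i ∈ Finset.range t, μ i) / (b t * μ t) :=
      div_nonneg (mul_nonneg hμt.le (hFnn t (by omega))) (hbμ t ht htw.le).le
    linarith
  have hft1 : 0 ≤ f (t + 1) := by
    rw [hf_gt (t + 1) (by omega) (by omega)]
    exact div_nonneg (mul_nonneg hμt.le (by linarith [hFle1 (t + 1) (by omega)]))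
      (hbμ (t + 1) (by omega) (by omega)).le
  have hfw : 0 ≤ f w := by
    rw [hf_gt w htw le_rfl]
    exact div_nonneg (mul_nonneg hμt.le (by linarith [hFle1 w (by omega)]))
      (hbμ w hw le_rfl).le
  have hΔt : 0 ≤ f (t + 1) - f t := by linarith
  constructor
  · -- part 1: uniform bound
    intro s hs
    have hsw : s < w := by omega
    rcases lt_trichotomy s t with h | h | h
    · have hd : f (s + 1) ≤ f s := dec1 s h
      rw [abs_of_nonpos (by linarith)]
      have tele : ∑ i ∈ Finset.range t, (f i - f (i + 1)) = f 0 - f t :=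
        Finset.sum_range_sub' f t
      have single : f s - f (s + 1) ≤ ∑ i ∈ Finset.range t, (f i - f (i + 1)) := by
        apply Finset.single_le_sum (f := fun i => f i - f (i + 1))
        · intro i hi
          rw [Finset.mem_range] at hi
          have := dec1 i hi
          linarith
        · exact Finset.mem_range.mpr h
      rw [hf0] at tele
      linarith
    · subst h
      rw [abs_of_nonneg hΔt]
    · have hd : f (s + 1) ≤ f s := dec2 s h hsw
      rw [abs_of_nonpos (by linarith)]
      have tele : ∑ i ∈ Finset.range (w - (t + 1)), (f (t + 1 + i) - f (t + 1 + i + 1))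
          = f (t + 1) - f w := by
        have h0 := Finset.sum_range_sub' (fun i => f (t + 1 + i)) (w - (t + 1))
        have hx : t + 1 + (w - (t + 1)) = w := by omega
        simp only [hx, Nat.add_zero] at h0
        exact h0
      have hmem : s - (t + 1) ∈ Finset.range (w - (t + 1)) := by
        rw [Finset.mem_range]; omega
      have single : f (t + 1 + (s - (t + 1))) - f (t + 1 + (s - (t + 1)) + 1) ≤
          ∑ i ∈ Finset.range (w - (t + 1)), (f (t + 1 + i) - f (t + 1 + i + 1)) := by
        apply Finset.single_le_sum (f := fun i => f (t + 1 + i) - f (t + 1 + i + 1))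
        · intro i hi
          rw [Finset.mem_range] at hi
          have := dec2 (t + 1 + i) (by omega) (by omega)
          linarith
        · exact hmem
      have hy : t + 1 + (s - (t + 1)) = s := by omega
      rw [hy] at single
      linarith
  · -- part 2: bound by min(1/a_t, 1/b_t)
    have hbt : (0:ℝ) < b t := hb_pos t ht htw.le
    have hat : (0:ℝ) < a t := ha_pos t htw
    have e1 : f t = -((∑ i ∈ Finset.range t, μ i) / b t) := by
      rw [hf_le t ht le_rfl]
      have : μ t * (∑ i ∈ Finset.range t, μ i) / (b t * μ t)
          = (∑ i ∈ Finset.range t, μ i) / b t := by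
        rw [mul_comm (b t) (μ t), mul_div_mul_left _ _ hμt.ne']
      rw [this]
    have e2 : f (t + 1) = (1 - ∑ i ∈ Finset.range (t + 1), μ i) / a t := by
      rw [hf_gt (t + 1) (by omega) (by omega), hdb t htw, mul_comm (a t) (μ t),
        mul_div_mul_left _ _ hμt.ne']
    rw [e1, e2, sub_neg_eq_add]
    apply le_min
    · -- ≤ (a t)⁻¹
      rw [← one_div]
      have key := hI t ht htw.le
      rw [div_add_div _ _ hat.ne' hbt.ne', div_le_div_iff₀ (mul_pos hat hbt) hat]
      nlinarith [key, mul_le_mul_of_nonneg_left key hat.le]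
    · -- ≤ (b t)⁻¹
      rw [← one_div]
      have key := hII t htw
      have h1 : (1 - ∑ i ∈ Finset.range (t + 1), μ i) / a t ≤
          (1 - ∑ i ∈ Finset.range t, μ i) / b t := by
        rw [div_le_div_iff₀ hat hbt]
        nlinarith [key]
      have h2 : (1 - ∑ i ∈ Finset.range t, μ i) / b t +
          (∑ i ∈ Finset.range t, μ i) / b t = 1 / b t := by
        rw [← add_div]
        ring_nf
      linarith
end

section
/- In the setting of the Stein operator inverse lemma, the ℓ¹ norm of the forward differences satisfies Σ_{s=0}^{w} |Δf(s)| ≤ 2·Δf(t). -/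
/-- ℓ¹ bound on the forward differences of the Stein operator inverse:
`Σ_s |Δf(s)| ≤ 2 · Δf(t)`. -/
theorem stein_operator_inverse_diff_l1 (w t : ℕ) (hw : 1 ≤ w) (ht : 1 ≤ t) (htw : t < w)
    (a b μ f : ℕ → ℝ)
    (ha_pos : ∀ s, s < w → 0 < a s) (ha_zero : a w = 0)
    (ha_anti : ∀ s, s < w → a (s + 1) < a s)
    (hb_zero : b 0 = 0) (hb_pos : ∀ s, 1 ≤ s → s ≤ w → 0 < b s)
    (hb_mono : ∀ s, s < w → b s < b (s + 1))
    (hμ : ∀ s, s ≤ w → μ s = μ 0 * ∏ i ∈ Finset.range s, (a i / b (i + 1)))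
    (hμsum : ∑ s ∈ Finset.range (w + 1), μ s = 1)
    (hf0 : f 0 = 0)
    (hf : ∀ s, 1 ≤ s → s ≤ w →
      f s = μ t / (b s * μ s) *
        ((if t < s then (1 : ℝ) else 0) - ∑ i ∈ Finset.range s, μ i)) :
    ∑ s ∈ Finset.range w, |f (s + 1) - f s| ≤ 2 * (f (t + 1) - f t) := by
  -- positivity of the products
  have hprod : ∀ s, s ≤ w → 0 < ∏ i ∈ Finset.range s, (a i / b (i + 1)) := by
    intro s hs
    apply Finset.prod_pos
    intro i hi
    simp only [Finset.mem_range] at hi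
    exact div_pos (ha_pos i (by omega)) (hb_pos (i + 1) (by omega) (by omega))
  have hsum' : μ 0 * ∑ s ∈ Finset.range (w + 1), ∏ i ∈ Finset.range s, (a i / b (i + 1)) = 1 := by
    rw [Finset.mul_sum, ← hμsum]
    apply Finset.sum_congr rfl
    intro s hs
    simp only [Finset.mem_range] at hs
    exact (hμ s (by omega)).symm
  have hPsum : 0 < ∑ s ∈ Finset.range (w + 1), ∏ i ∈ Finset.range s, (a i / b (i + 1)) := by
    apply Finset.sum_pos
    · intro s hs
      simp only [Finset.mem_range] at hs
      exact hprod s (by omega)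
    · exact ⟨0, Finset.mem_range.mpr (by omega)⟩
  have hμ0 : 0 < μ 0 := by
    by_contra h
    push_neg at h
    nlinarith [hsum', hPsum]
  have hμpos : ∀ s, s ≤ w → 0 < μ s := by
    intro s hs
    rw [hμ s hs]
    exact mul_pos hμ0 (hprod s hs)
  -- detailed balance
  have hμ_succ : ∀ s, s < w → μ (s + 1) = μ s * (a s / b (s + 1)) := by
    intro s hs
    rw [hμ (s + 1) hs, hμ s hs.le, Finset.prod_range_succ, mul_assoc]
  have hdb : ∀ s, s < w → b (s + 1) * μ (s + 1) = a s * μ s := by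
    intro s hs
    have hb1 : 0 < b (s + 1) := hb_pos (s + 1) (by omega) hs
    rw [hμ_succ s hs]
    field_simp
  -- monotonicity of a and b
  have ha_le : ∀ j, j ≤ w → ∀ i, i ≤ j → a j ≤ a i := by
    intro j
    induction j with
    | zero => intro _ i hi; rw [Nat.le_zero.mp hi]
    | succ n ih =>
      intro hn i hi
      rcases Nat.lt_or_ge i (n + 1) with h | h
      · exact le_trans (le_of_lt (ha_anti n (by omega))) (ih (by omega) i (by omega))
      · have : i = n + 1 := by omega
        simp [this]
  have hb_le : ∀ j, j ≤ w → ∀ i, i ≤ j → b i ≤ b j := by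
    intro j
    induction j with
    | zero => intro _ i hi; rw [Nat.le_zero.mp hi]
    | succ n ih =>
      intro hn i hi
      rcases Nat.lt_or_ge i (n + 1) with h | h
      · exact le_trans (ih (by omega) i (by omega)) (le_of_lt (hb_mono n (by omega)))
      · have : i = n + 1 := by omega
        simp [this]
  -- partial sums
  have hF_pos : ∀ s, 1 ≤ s → s ≤ w → 0 < ∑ i ∈ Finset.range s, μ i := by
    intro s h1 h2
    apply Finset.sum_pos
    · intro i hi
      simp only [Finset.mem_range] at hi
      exact hμpos i (by omega)
    · exact ⟨0, Finset.mem_range.mpr (by omega)⟩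
  have htail : ∀ s, s ≤ w + 1 → (1 : ℝ) - ∑ i ∈ Finset.range s, μ i
      = ∑ i ∈ Finset.Ico s (w + 1), μ i := by
    intro s hs
    rw [← hμsum, Finset.range_eq_Ico,
      ← Finset.sum_Ico_consecutive _ (Nat.zero_le s) hs]
    rw [Finset.range_eq_Ico]
    ring
  have hG_nonneg : ∀ s, 0 ≤ ∑ i ∈ Finset.Ico s (w + 1), μ i := by
    intro s
    apply Finset.sum_nonneg
    intro i hi
    simp only [Finset.mem_Ico] at hi
    exact (hμpos i (by omega)).le
  -- sign facts
  have hf_nonpos : ∀ s, s ≤ t → f s ≤ 0 := by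
    intro s hs
    rcases Nat.eq_zero_or_pos s with h | h
    · simp [h, hf0]
    · rw [hf s h (by omega), if_neg (by omega)]
      have hF := hF_pos s h (by omega)
      have hbμ : 0 < b s * μ s := mul_pos (hb_pos s h (by omega)) (hμpos s (by omega))
      have hμt := hμpos t (by omega)
      have hdiv : 0 < μ t / (b s * μ s) := div_pos hμt hbμ
      nlinarith
  have hf_nonneg : ∀ s, t < s → s ≤ w → 0 ≤ f s := by
    intro s hs hsw
    rw [hf s (by omega) hsw, if_pos hs, htail s (by omega)]
    exact mul_nonneg (div_pos (hμpos t (by omega))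
      (mul_pos (hb_pos s (by omega) hsw) (hμpos s hsw))).le (hG_nonneg s)
  -- monotone decrease away from t
  have hdec : ∀ s, s < w → s ≠ t → f (s + 1) ≤ f s := by
    intro s hsw hst
    rcases Nat.lt_or_ge s t with hlt | hge
    · rcases Nat.eq_zero_or_pos s with rfl | hs1
      · rw [hf0]
        exact hf_nonpos 1 hlt
      · -- 1 ≤ s < t
        have key : a s * ∑ i ∈ Finset.range s, μ i
            ≤ b s * ∑ i ∈ Finset.range (s + 1), μ i := by
          have h1 : a s * ∑ i ∈ Finset.range s, μ i
              ≤ b s * ∑ i ∈ Finset.range s, μ (i + 1) := by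
            rw [Finset.mul_sum, Finset.mul_sum]
            apply Finset.sum_le_sum
            intro i hi
            simp only [Finset.mem_range] at hi
            calc a s * μ i ≤ a i * μ i :=
                  mul_le_mul_of_nonneg_right (ha_le s (by omega) i (by omega))
                    (hμpos i (by omega)).le
              _ = b (i + 1) * μ (i + 1) := (hdb i (by omega)).symm
              _ ≤ b s * μ (i + 1) :=
                  mul_le_mul_of_nonneg_right (hb_le s (by omega) (i + 1) (by omega))
                    (hμpos (i + 1) (by omega)).le
          have h2 : ∑ i ∈ Finset.range s, μ (i + 1) ≤ ∑ i ∈ Finset.range (s + 1), μ i := by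
            rw [Finset.sum_range_succ']
            linarith [hμ0.le]
          calc a s * ∑ i ∈ Finset.range s, μ i
              ≤ b s * ∑ i ∈ Finset.range s, μ (i + 1) := h1
            _ ≤ b s * ∑ i ∈ Finset.range (s + 1), μ i :=
              mul_le_mul_of_nonneg_left h2 (hb_pos s (by omega) (by omega)).le
        rw [hf (s + 1) (by omega) (by omega), hf s (by omega) (by omega),
          if_neg (by omega), if_neg (by omega), hdb s hsw]
        have hD1 : 0 < a s * μ s := mul_pos (ha_pos s (by omega)) (hμpos s (by omega))
        have hD2 : 0 < b s * μ s := mul_pos (hb_pos s (by omega) (by omega)) (hμpos s (by omega))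
        have hμt : 0 < μ t := hμpos t (by omega)
        have hμs : 0 < μ s := hμpos s (by omega)
        rw [div_mul_eq_mul_div, div_mul_eq_mul_div, div_le_div_iff₀ hD1 hD2]
        nlinarith [mul_le_mul_of_nonneg_left key (mul_nonneg hμt.le hμs.le)]
    · have hts : t < s := lt_of_le_of_ne hge (Ne.symm hst)
      have e2 : ∑ i ∈ Finset.Ico (s + 1) (w + 1), (b i * μ i)
          = ∑ j ∈ Finset.Ico s w, (a j * μ j) := by
        rw [Finset.sum_Ico_eq_sum_range, Finset.sum_Ico_eq_sum_range,
          show w + 1 - (s + 1) = w - s from by omega]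
        apply Finset.sum_congr rfl
        intro i hi
        simp only [Finset.mem_range] at hi
        rw [show s + 1 + i = (s + i) + 1 from by omega]
        exact hdb (s + i) (by omega)
      have key2 : b s * ∑ i ∈ Finset.Ico (s + 1) (w + 1), μ i
          ≤ a s * ∑ i ∈ Finset.Ico s (w + 1), μ i := by
        calc b s * ∑ i ∈ Finset.Ico (s + 1) (w + 1), μ i
            = ∑ i ∈ Finset.Ico (s + 1) (w + 1), b s * μ i := Finset.mul_sum _ _ _
          _ ≤ ∑ i ∈ Finset.Ico (s + 1) (w + 1), b i * μ i := by
              apply Finset.sum_le_sum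
              intro i hi
              simp only [Finset.mem_Ico] at hi
              exact mul_le_mul_of_nonneg_right (hb_le i (by omega) s (by omega))
                (hμpos i (by omega)).le
          _ = ∑ j ∈ Finset.Ico s w, a j * μ j := e2
          _ ≤ ∑ j ∈ Finset.Ico s w, a s * μ j := by
              apply Finset.sum_le_sum
              intro j hj
              simp only [Finset.mem_Ico] at hj
              exact mul_le_mul_of_nonneg_right (ha_le j (by omega) s (by omega))
                (hμpos j (by omega)).le
          _ = a s * ∑ j ∈ Finset.Ico s w, μ j := (Finset.mul_sum _ _ _).symm
          _ ≤ a s * ∑ i ∈ Finset.Ico s (w + 1), μ i := by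
              apply mul_le_mul_of_nonneg_left _ (ha_pos s hsw).le
              apply Finset.sum_le_sum_of_subset_of_nonneg
                (Finset.Ico_subset_Ico_right (by omega))
              intro i hi _
              simp only [Finset.mem_Ico] at hi
              exact (hμpos i (by omega)).le
      rw [hf (s + 1) (by omega) (by omega), hf s (by omega) (by omega),
        if_pos (show t < s + 1 by omega), if_pos hts, hdb s hsw,
        htail (s + 1) (by omega), htail s (by omega)]
      have hD1 : 0 < a s * μ s := mul_pos (ha_pos s (by omega)) (hμpos s (by omega))
      have hD2 : 0 < b s * μ s := mul_pos (hb_pos s (by omega) (by omega)) (hμpos s (by omega))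
      have hμt : 0 < μ t := hμpos t (by omega)
      have hμs : 0 < μ s := hμpos s (by omega)
      rw [div_mul_eq_mul_div, div_mul_eq_mul_div, div_le_div_iff₀ hD1 hD2]
      nlinarith [mul_le_mul_of_nonneg_left key2 (mul_nonneg hμt.le hμs.le)]
  -- telescoping
  have tele : ∀ g : ℕ → ℝ, ∀ m n : ℕ, m ≤ n →
      ∑ s ∈ Finset.Ico m n, (g s - g (s + 1)) = g m - g n := by
    intro g m n h
    induction n, h using Nat.le_induction with
    | base => simp
    | succ n hn ih => rw [Finset.sum_Ico_succ_top hn, ih]; ring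
  have h1 : ∑ s ∈ Finset.range w, |f (s + 1) - f s|
      = ∑ s ∈ Finset.Ico 0 t, |f (s + 1) - f s| + ∑ s ∈ Finset.Ico t w, |f (s + 1) - f s| := by
    rw [Finset.range_eq_Ico, ← Finset.sum_Ico_consecutive _ (Nat.zero_le t) (le_of_lt htw)]
  have h2 : ∑ s ∈ Finset.Ico t w, |f (s + 1) - f s|
      = |f (t + 1) - f t| + ∑ s ∈ Finset.Ico (t + 1) w, |f (s + 1) - f s| :=
    Finset.sum_eq_sum_Ico_succ_bot htw _
  have h3 : ∑ s ∈ Finset.Ico 0 t, |f (s + 1) - f s| = f 0 - f t := by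
    rw [← tele f 0 t (Nat.zero_le t)]
    apply Finset.sum_congr rfl
    intro s hs
    simp only [Finset.mem_Ico] at hs
    rw [abs_of_nonpos (by linarith [hdec s (by omega) (by omega)])]
    ring
  have h4 : ∑ s ∈ Finset.Ico (t + 1) w, |f (s + 1) - f s| = f (t + 1) - f w := by
    rw [← tele f (t + 1) w htw]
    apply Finset.sum_congr rfl
    intro s hs
    simp only [Finset.mem_Ico] at hs
    rw [abs_of_nonpos (by linarith [hdec s (by omega) (by omega)])]
    ring
  have h5 : |f (t + 1) - f t| = f (t + 1) - f t :=
    abs_of_nonneg (by linarith [hf_nonpos t le_rfl, hf_nonneg (t + 1) (by omega) (by omega)])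
  have h6 : 0 ≤ f w := hf_nonneg w (by omega) le_rfl
  rw [h1, h2, h3, h4, h5, hf0]
  linarith
end
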